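/- Let s ≥ 2 be even and consider any simple graph G on a linearly ordered s-element vertex set such that every vertex has degree at least 1 (every element takes part in at least one comparison). If additionally the number of LR-edges (edges with one endpoint among the smallest s/2 vertices and the other among the largest s/2 vertices) is m, then the thickness t(G) = max_v |{edges spanning over v}| satisfies t(G) ≥ (m−1)/2. -/

import Mathlib

/-- Thickness of a graph on `{1,…,s}` given by its edge set (pairs `(x,y)` with
`x < y`): maximum over interior vertices `v` of the number of edges spanning
over `v`. -/
def thick (G : Finset (ℕ × ℕ)) (s : ℕ) : ℕ :=
  (Finset.Icc 2 (s - 1)).sup (fun v => (G.filter (fun e => e.1 < v ∧ v < e.2)).card)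

/-- Let `s ≥ 2` be even and `G` a simple graph on `{1,…,s}` in which every
vertex has degree at least `1`.  If the number of LR-edges (edges with one
endpoint among the smallest `s/2` vertices and the other among the largest
`s/2` vertices) is `m`, then `t(G) ≥ (m−1)/2`. -/
theorem stmt14 (s : ℕ) (hs : 2 ≤ s) (hseven : Even s) (G : Finset (ℕ × ℕ))
    (hG : ∀ e ∈ G, 1 ≤ e.1 ∧ e.1 < e.2 ∧ e.2 ≤ s)
    (hdeg : ∀ v, 1 ≤ v → v ≤ s → ∃ e ∈ G, e.1 = v ∨ e.2 = v)
    (m : ℕ)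
    (hm : m = (G.filter (fun e => e.1 ≤ s / 2 ∧ s / 2 + 1 ≤ e.2)).card) :
    ((m : ℝ) - 1) / 2 ≤ (thick G s : ℝ) := by
  have key : m ≤ 2 * thick G s + 1 := by
    subst hm
    rcases eq_or_lt_of_le hs with h2 | h2
    · -- s = 2
      have hsub : G.filter (fun e => e.1 ≤ s / 2 ∧ s / 2 + 1 ≤ e.2) ⊆ {(1, 2)} := by
        intro e he
        rw [Finset.mem_filter] at he
        obtain ⟨hg, hl, hr⟩ := he
        obtain ⟨ha1, hlt, hle⟩ := hG e hg
        obtain ⟨x, y⟩ := e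
        simp only [Finset.mem_singleton, Prod.mk.injEq]
        simp only at *
        omega
      have := Finset.card_le_card hsub
      simp only [Finset.card_singleton] at this
      omega
    · have h4 : 4 ≤ s := by obtain ⟨r, hr⟩ := hseven; omega
      set a := s / 2 with ha
      have haI : a ∈ Finset.Icc 2 (s - 1) := by
        simp only [Finset.mem_Icc]; omega
      have hbI : a + 1 ∈ Finset.Icc 2 (s - 1) := by
        simp only [Finset.mem_Icc]; omega
      have hta : (G.filter (fun e => e.1 < a ∧ a < e.2)).card ≤ thick G s :=
        by unfold thick; exact Finset.le_sup (f := fun v => (G.filter (fun e => e.1 < v ∧ v < e.2)).card) haI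
      have htb : (G.filter (fun e => e.1 < a + 1 ∧ a + 1 < e.2)).card ≤ thick G s :=
        by unfold thick; exact Finset.le_sup (f := fun v => (G.filter (fun e => e.1 < v ∧ v < e.2)).card) hbI
      have hsub : (G.filter (fun e => e.1 ≤ a ∧ a + 1 ≤ e.2)).erase (a, a + 1) ⊆
          G.filter (fun e => e.1 < a ∧ a < e.2) ∪
          G.filter (fun e => e.1 < a + 1 ∧ a + 1 < e.2) := by
        intro e he
        rw [Finset.mem_erase, Finset.mem_filter] at he
        obtain ⟨hne, hg, h1, h2'⟩ := he
        rw [Finset.mem_union, Finset.mem_filter, Finset.mem_filter]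
        obtain ⟨x, y⟩ := e
        simp only [ne_eq, Prod.mk.injEq, not_and] at hne ⊢
        by_cases hx : x < a
        · exact Or.inl ⟨hg, hx, by omega⟩
        · refine Or.inr ⟨hg, by omega, ?_⟩
          have : ¬(x = a ∧ y = a + 1) := by
            intro ⟨hxa, hya⟩; exact hne hxa hya
          omega
      have hcard1 : (G.filter (fun e => e.1 ≤ a ∧ a + 1 ≤ e.2)).card ≤
          ((G.filter (fun e => e.1 ≤ a ∧ a + 1 ≤ e.2)).erase (a, a + 1)).card + 1 := by
        by_cases hp : (a, a + 1) ∈ G.filter (fun e => e.1 ≤ a ∧ a + 1 ≤ e.2)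
        · rw [Finset.card_erase_of_mem hp]
          have := Finset.card_pos.2 ⟨_, hp⟩
          omega
        · rw [Finset.erase_eq_of_notMem hp]; omega
      have hcard2 := Finset.card_le_card hsub
      have hcard3 := Finset.card_union_le
        (G.filter (fun e => e.1 < a ∧ a < e.2))
        (G.filter (fun e => e.1 < a + 1 ∧ a + 1 < e.2))
      omega
  rw [div_le_iff₀ (by norm_num : (0 : ℝ) < 2)]
  have : (m : ℝ) ≤ 2 * thick G s + 1 := by exact_mod_cast key
  linarith
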